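/- arXiv:1309.3699 — 3 statements merged into one kernel-verified Lean document; each statement's English description precedes it below -/
import Mathlib

section
/- Stability of the LLSVM weight vector (Equation (9) in Lemma 5). Let n ≥ 1, λ > 0, let (x₁,y₁),…,(x_n,y_n) ∈ ℝ^d × {−1,+1} with ‖(x_j,1)‖ ≤ M for all j, and let k_j = K(x_j,x₀,σ) ∈ [0,K_m]. Let ŵ be the unique minimizer of F(w) = (λ/2)‖w‖² + (1/n)Σ_{j=1}^n L(y_j⟨w,x_j⟩)k_j and, for i ∈ {1,…,n}, let ŵ^{-i} be the unique minimizer of F with the i-th summand removed. Then ‖ŵ − ŵ^{-i}‖ ≤ 2MK_m/(nλ). -/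
open MeasureTheory Metric Filter Set
open scoped ENNReal Topology BigOperators

noncomputable section

/-- The hinge loss `L(t) = max (1 - t) 0`. -/
def hinge (t : ℝ) : ℝ := max (1 - t) 0

/-- The augmented vector `(x, 1) ∈ ℝ^(d+1)`. -/
def aug {d : ℕ} (x : EuclideanSpace ℝ (Fin d)) : EuclideanSpace ℝ (Fin (d + 1)) :=
  WithLp.toLp 2 (Fin.snoc x 1 : Fin (d + 1) → ℝ)

/-- The affine predictor `⟨w, x⟩ := ⟨w, (x,1)⟩`. -/
def pred {d : ℕ} (w : EuclideanSpace ℝ (Fin (d + 1))) (x : EuclideanSpace ℝ (Fin d)) : ℝ :=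
  inner ℝ w (aug x)

/-! Proof idea: both objectives are `λ`-strongly convex, so at its minimizer each objective
exceeds its minimum by at least `λ/4 ‖ŵ - ŵ⁻ⁱ‖²` at the other minimizer. Adding the two
inequalities, the common terms cancel and `λ/2 ‖ŵ - ŵ⁻ⁱ‖²` is bounded by the change of the
single removed summand `(1/n) L(yᵢ⟨w,xᵢ⟩) kᵢ`, which is `(M Kₘ / n)`-Lipschitz in `w`. -/

lemma convexOn_hinge : ConvexOn ℝ univ hinge :=
  ((convexOn_const 1 convex_univ).sub (concaveOn_id convex_univ)).sup
    (convexOn_const 0 convex_univ)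

lemma hinge_sub_hinge_le (a b : ℝ) : hinge a - hinge b ≤ |a - b| :=
  calc hinge a - hinge b ≤ |(1 - a) - (1 - b)| :=
        (le_abs_self _).trans (abs_max_sub_max_le_abs _ _ _)
    _ = |a - b| := by rw [abs_sub_comm]; ring_nf

section InnerProductSpace

variable {E : Type*} [NormedAddCommGroup E] [InnerProductSpace ℝ E]

lemma convexOn_sum_hinge_mul_inner {ι : Type*} (s : Finset ι) (a : ι → E) (y k : ι → ℝ)
    (hk : ∀ j ∈ s, 0 ≤ k j) :
    ConvexOn ℝ univ fun w => ∑ j ∈ s, hinge (y j * inner ℝ w (a j)) * k j := by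
  have hterm : ∀ j ∈ s, ConvexOn ℝ univ fun w : E => hinge (y j * inner ℝ w (a j)) * k j := by
    intro j hj
    have hlin := convexOn_hinge.comp_linearMap (y j • innerₛₗ ℝ (a j))
    simpa [mul_comm, real_inner_comm] using hlin.smul (hk j hj)
  rw [← Finset.sum_fn]
  exact Finset.sum_induction _ (ConvexOn ℝ univ) (fun _ _ => ConvexOn.add)
    (convexOn_const 0 convex_univ) hterm

lemma hinge_mul_inner_sub_le (u v a : E) {y k Km M : ℝ} (hy : |y| ≤ 1) (ha : ‖a‖ ≤ M)
    (hk : k ∈ Icc 0 Km) :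
    hinge (y * inner ℝ v a) * k - hinge (y * inner ℝ u a) * k ≤ Km * M * ‖u - v‖ := by
  have hinner : |y * inner ℝ v a - y * inner ℝ u a| ≤ ‖u - v‖ * M :=
    calc |y * inner ℝ v a - y * inner ℝ u a| = |y| * |inner ℝ (u - v) a| := by
          rw [← abs_mul, ← abs_neg, inner_sub_left]; ring_nf
      _ ≤ 1 * (‖u - v‖ * ‖a‖) :=
          mul_le_mul hy (abs_real_inner_le_norm _ _) (abs_nonneg _) zero_le_one
      _ ≤ ‖u - v‖ * M := by rw [one_mul]; gcongr
  have hM : 0 ≤ ‖u - v‖ * M := (abs_nonneg _).trans hinner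
  calc hinge (y * inner ℝ v a) * k - hinge (y * inner ℝ u a) * k
        = (hinge (y * inner ℝ v a) - hinge (y * inner ℝ u a)) * k := by ring
    _ ≤ (‖u - v‖ * M) * Km :=
        mul_le_mul ((hinge_sub_hinge_le _ _).trans hinner) hk.2 hk.1 hM
    _ = Km * M * ‖u - v‖ := by ring

lemma norm_smul_half_add_sq (u v : E) :
    ‖(1 / 2 : ℝ) • u + (1 / 2 : ℝ) • v‖ ^ 2 = (‖u‖ ^ 2 + ‖v‖ ^ 2) / 2 - ‖u - v‖ ^ 2 / 4 := by
  rw [← smul_add, norm_smul, mul_pow, Real.norm_of_nonneg (by norm_num)]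
  linarith [parallelogram_law_with_norm ℝ u v]

/-- The constant `λ/4` comes from testing the minimality of `u` at the midpoint of `u` and `v`. -/
lemma sq_norm_sub_le_of_isMin_add_convexOn {lam : ℝ} {C : E → ℝ} (hC : ConvexOn ℝ univ C)
    {u : E} (hu : ∀ w, lam / 2 * ‖u‖ ^ 2 + C u ≤ lam / 2 * ‖w‖ ^ 2 + C w) (v : E) :
    lam / 4 * ‖u - v‖ ^ 2 ≤ (lam / 2 * ‖v‖ ^ 2 + C v) - (lam / 2 * ‖u‖ ^ 2 + C u) := by
  have hmid := hu ((1 / 2 : ℝ) • u + (1 / 2 : ℝ) • v)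
  have hCmid := hC.2 (mem_univ u) (mem_univ v) (by norm_num : (0 : ℝ) ≤ 1 / 2)
    (by norm_num : (0 : ℝ) ≤ 1 / 2) (by norm_num)
  rw [norm_smul_half_add_sq] at hmid
  simp only [smul_eq_mul] at hCmid
  linarith

theorem norm_sub_le_of_isMin_add_convexOn {lam L : ℝ} (hlam : 0 < lam) (hL : 0 ≤ L)
    {C₁ C₂ : E → ℝ} (hC₁ : ConvexOn ℝ univ C₁) (hC₂ : ConvexOn ℝ univ C₂) {u v : E}
    (hu : ∀ w, lam / 2 * ‖u‖ ^ 2 + C₁ u ≤ lam / 2 * ‖w‖ ^ 2 + C₁ w)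
    (hv : ∀ w, lam / 2 * ‖v‖ ^ 2 + C₂ v ≤ lam / 2 * ‖w‖ ^ 2 + C₂ w)
    (hdiff : (C₁ v - C₂ v) - (C₁ u - C₂ u) ≤ L * ‖u - v‖) :
    ‖u - v‖ ≤ 2 * L / lam := by
  have h₁ := sq_norm_sub_le_of_isMin_add_convexOn hC₁ hu v
  have h₂ := sq_norm_sub_le_of_isMin_add_convexOn hC₂ hv u
  rw [norm_sub_rev v u] at h₂
  have hsq : lam / 2 * ‖u - v‖ ^ 2 ≤ L * ‖u - v‖ := by linarith
  rw [le_div_iff₀ hlam]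
  rcases (norm_nonneg (u - v)).eq_or_lt with h | h
  · rw [← h, zero_mul]; positivity
  · nlinarith

end InnerProductSpace

theorem llsvm_weight_stability_general {d n : ℕ} (lam M Km : ℝ) (hlam : 0 < lam)
    (xs : Fin n → EuclideanSpace ℝ (Fin d)) (ys k : Fin n → ℝ)
    (hys : ∀ j, ys j = 1 ∨ ys j = -1)
    (hM : ∀ j, ‖aug (xs j)‖ ≤ M)
    (hk : ∀ j, k j ∈ Set.Icc (0 : ℝ) Km)
    (i : Fin n) (what whati : EuclideanSpace ℝ (Fin (d + 1)))
    (hwhat : ∀ w, lam / 2 * ‖what‖ ^ 2 + (1 / n) * ∑ j, hinge (ys j * pred what (xs j)) * k j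
      ≤ lam / 2 * ‖w‖ ^ 2 + (1 / n) * ∑ j, hinge (ys j * pred w (xs j)) * k j)
    (hwhati : ∀ w, lam / 2 * ‖whati‖ ^ 2
        + (1 / n) * ∑ j ∈ Finset.univ.erase i, hinge (ys j * pred whati (xs j)) * k j
      ≤ lam / 2 * ‖w‖ ^ 2
        + (1 / n) * ∑ j ∈ Finset.univ.erase i, hinge (ys j * pred w (xs j)) * k j) :
    ‖what - whati‖ ≤ 2 * M * Km / (n * lam) := by
  have hn : (0 : ℝ) < n := by exact_mod_cast i.pos
  have hconv (s : Finset (Fin n)) :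
      ConvexOn ℝ univ fun w => (1 / n : ℝ) * ∑ j ∈ s, hinge (ys j * pred w (xs j)) * k j :=
    (convexOn_sum_hinge_mul_inner s (fun j => aug (xs j)) ys k fun j _ => (hk j).1).smul
      (by positivity)
  have hremoved (w : EuclideanSpace ℝ (Fin (d + 1))) :
      (1 / n : ℝ) * ∑ j, hinge (ys j * pred w (xs j)) * k j
        - (1 / n) * ∑ j ∈ Finset.univ.erase i, hinge (ys j * pred w (xs j)) * k j
        = (1 / n) * (hinge (ys i * pred w (xs i)) * k i) := by
    rw [← Finset.add_sum_erase _ _ (Finset.mem_univ i)]; ring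
  have hy : |ys i| ≤ 1 := by rcases hys i with h | h <;> simp [h]
  have hL : 0 ≤ 1 / n * (Km * M) := by
    have := (hk i).1.trans (hk i).2
    have := (norm_nonneg _).trans (hM i)
    positivity
  refine (norm_sub_le_of_isMin_add_convexOn hlam hL (hconv _) (hconv _) hwhat hwhati ?_).trans_eq
    (by field_simp)
  rw [hremoved, hremoved, ← mul_sub, mul_assoc]
  exact mul_le_mul_of_nonneg_left (hinge_mul_inner_sub_le _ _ _ hy (hM i) (hk i)) (by positivity)

/-- Stability of the LLSVM weight vector (Equation (9) of Lemma 5): removing one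
training example moves the minimizer of the regularized empirical hinge objective
by at most `2 M K_m / (n λ)`. -/
theorem llsvm_weight_stability {d n : ℕ} (hn : 1 ≤ n) (lam M Km : ℝ) (hlam : 0 < lam)
    (xs : Fin n → EuclideanSpace ℝ (Fin d)) (ys k : Fin n → ℝ)
    (hys : ∀ j, ys j = 1 ∨ ys j = -1)
    (hM : ∀ j, ‖aug (xs j)‖ ≤ M)
    (hk : ∀ j, k j ∈ Set.Icc (0 : ℝ) Km)
    (i : Fin n) (what whati : EuclideanSpace ℝ (Fin (d + 1)))
    (hwhat : ∀ w, lam / 2 * ‖what‖ ^ 2 + (1 / n) * ∑ j, hinge (ys j * pred what (xs j)) * k j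
      ≤ lam / 2 * ‖w‖ ^ 2 + (1 / n) * ∑ j, hinge (ys j * pred w (xs j)) * k j)
    (hwhati : ∀ w, lam / 2 * ‖whati‖ ^ 2
        + (1 / n) * ∑ j ∈ Finset.univ.erase i, hinge (ys j * pred whati (xs j)) * k j
      ≤ lam / 2 * ‖w‖ ^ 2
        + (1 / n) * ∑ j ∈ Finset.univ.erase i, hinge (ys j * pred w (xs j)) * k j) :
    ‖what - whati‖ ≤ 2 * M * Km / (n * lam) :=
  llsvm_weight_stability_general lam M Km hlam xs ys k hys hM hk i what whati hwhat hwhati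
end
end

section
/- Stability of the centered regularized loss q (supplement to Theorem 8). Let (x₁,y₁),…,(x_n,y_n) ∈ ℝ^d × {−1,+1} with ‖(x_j,1)‖ ≤ M, let k_j = K(x_j,x₀,σ) ∈ [0,K_m], let ŵ minimize F(w) = (λ/2)‖w‖² + (1/n)Σ_{j=1}^n L(y_j⟨w,x_j⟩)k_j, and let ŵ^{-i} minimize F with the i-th summand removed. Then for every (x,y) ∈ ℝ^d × {−1,+1} with ‖(x,1)‖ ≤ M: | [ (λ/2)‖ŵ^{-i}‖² + L(y⟨ŵ^{-i},x⟩)K(x,x₀,σ) ] − [ (λ/2)‖ŵ‖² + L(y⟨ŵ,x⟩)K(x,x₀,σ) ] | ≤ (2M·K(x_i,x₀,σ)/(nλ))·( √((2λ/n)·Σ_{j=1}^n K(x_j,x₀,σ)) + M·K_m ). -/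
/-!
Both objectives are `λ`-strongly convex, so each exceeds its minimum value at `v` by at least
`(λ/4)‖v - w*‖²`, `w*` its minimizer (midpoint convexity). Adding these gaps for `ŵ` and `ŵ⁻ⁱ`,
each evaluated at the other minimizer, leaves only the `i`-th loss term, which is
`(M kᵢ / n)`-Lipschitz; hence `‖ŵ⁻ⁱ - ŵ‖ ≤ 2 M kᵢ / (nλ)`. Comparing with `w = 0` gives
`λ‖ŵ‖, λ‖ŵ⁻ⁱ‖ ≤ √((2λ/n) Σ kⱼ)`, and on that ball `w ↦ (λ/2)‖w‖² + L(y⟨w,x⟩) kx` is Lipschitz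
with constant `λ/2 (‖ŵ‖ + ‖ŵ⁻ⁱ‖) + M kx`.
-/

open MeasureTheory Metric Filter Set
open scoped ENNReal Topology BigOperators

noncomputable section

section RegularizedMinimizers

variable {E : Type*} [NormedAddCommGroup E] [InnerProductSpace ℝ E]

lemma ConvexOn.strongConvexOn_add_sq_norm {f : E → ℝ} (hf : ConvexOn ℝ univ f) (m : ℝ) :
    StrongConvexOn univ m fun v ↦ m / 2 * ‖v‖ ^ 2 + f v :=
  strongConvexOn_iff_convex.mpr (by simpa using hf)

lemma StrongConvexOn.sq_norm_sub_le_of_isMinOn {φ : E → ℝ} {m : ℝ} {w : E}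
    (hφ : StrongConvexOn univ m φ) (hw : IsMinOn φ univ w) (v : E) :
    m / 4 * ‖v - w‖ ^ 2 ≤ φ v - φ w := by
  have hmid := hφ.2 (mem_univ v) (mem_univ w) (by norm_num : (0 : ℝ) ≤ 1 / 2)
    (by norm_num : (0 : ℝ) ≤ 1 / 2) (by norm_num)
  have hmin := isMinOn_univ_iff.mp hw ((1 / 2 : ℝ) • v + (1 / 2 : ℝ) • w)
  simp only [smul_eq_mul] at hmid
  linarith

lemma sq_norm_sub_le_of_isMinOn_regularized {f g : E → ℝ} {lam : ℝ} {u w : E}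
    (hf : ConvexOn ℝ univ f) (hg : ConvexOn ℝ univ g)
    (hu : IsMinOn (fun v ↦ lam / 2 * ‖v‖ ^ 2 + f v) univ u)
    (hw : IsMinOn (fun v ↦ lam / 2 * ‖v‖ ^ 2 + g v) univ w) :
    lam / 2 * ‖u - w‖ ^ 2 ≤ (g u - f u) - (g w - f w) := by
  have hgap_f := (hf.strongConvexOn_add_sq_norm lam).sq_norm_sub_le_of_isMinOn hu w
  have hgap_g := (hg.strongConvexOn_add_sq_norm lam).sq_norm_sub_le_of_isMinOn hw u
  rw [norm_sub_rev] at hgap_f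
  linarith

lemma norm_sub_le_of_isMinOn_regularized {f g : E → ℝ} {lam L : ℝ} {u w : E}
    (hlam : 0 < lam) (hL : 0 ≤ L) (hf : ConvexOn ℝ univ f) (hg : ConvexOn ℝ univ g)
    (hu : IsMinOn (fun v ↦ lam / 2 * ‖v‖ ^ 2 + f v) univ u)
    (hw : IsMinOn (fun v ↦ lam / 2 * ‖v‖ ^ 2 + g v) univ w)
    (hlip : (g u - f u) - (g w - f w) ≤ L * ‖u - w‖) :
    ‖u - w‖ ≤ 2 * L / lam := by
  have hsq := (sq_norm_sub_le_of_isMinOn_regularized hf hg hu hw).trans hlip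
  rw [le_div_iff₀ hlam]
  rcases (norm_nonneg (u - w)).eq_or_lt with h0 | hpos
  · rw [← h0, zero_mul]
    positivity
  · exact le_of_mul_le_mul_right (by nlinarith) hpos

omit [InnerProductSpace ℝ E] in
lemma mul_norm_le_sqrt_of_isMinOn_regularized {f : E → ℝ} {lam B : ℝ} {w : E}
    (hw : IsMinOn (fun v ↦ lam / 2 * ‖v‖ ^ 2 + f v) univ w)
    (hlam : 0 ≤ lam) (hfw : 0 ≤ f w) (hf0 : f 0 ≤ B) :
    lam * ‖w‖ ≤ √(2 * lam * B) := by
  have hmin := isMinOn_univ_iff.mp hw 0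
  simp only [norm_zero] at hmin
  have hreg_nonneg : 0 ≤ lam / 2 * ‖w‖ ^ 2 := by positivity
  have hreg : lam / 2 * ‖w‖ ^ 2 ≤ B := by linarith
  rw [Real.le_sqrt (by positivity) (by nlinarith)]
  nlinarith

omit [InnerProductSpace ℝ E] in
lemma abs_sq_norm_sub_sq_norm_le (u w : E) :
    |‖u‖ ^ 2 - ‖w‖ ^ 2| ≤ ‖u - w‖ * (‖u‖ + ‖w‖) := by
  rw [sq_sub_sq, abs_mul, abs_of_nonneg (by positivity : 0 ≤ ‖u‖ + ‖w‖), mul_comm]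
  gcongr
  exact abs_norm_sub_norm_le u w

end RegularizedMinimizers

section Hinge

lemma hinge_nonneg (t : ℝ) : 0 ≤ hinge t := le_max_right _ _

lemma hinge_zero : hinge 0 = 1 := by simp [hinge]

lemma abs_hinge_sub_le (s t : ℝ) : |hinge s - hinge t| ≤ |s - t| := by
  simpa [hinge, abs_sub_comm s t] using abs_max_sub_max_le_abs (1 - s) (1 - t) 0

variable {d : ℕ}

lemma convexOn_hinge_pred (x : EuclideanSpace ℝ (Fin d)) (y : ℝ) :
    ConvexOn ℝ univ fun w ↦ hinge (y * pred w x) := by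
  refine ⟨convex_univ, fun u _ v _ a b ha hb hab ↦ ?_⟩
  convert convexOn_hinge.2 (mem_univ (y * pred u x)) (mem_univ (y * pred v x)) ha hb hab using 2
  simp only [pred, inner_add_left, real_inner_smul_left, smul_eq_mul]
  ring

lemma abs_hinge_pred_sub_le {x : EuclideanSpace ℝ (Fin d)} {y M : ℝ} (hy : |y| ≤ 1)
    (hx : ‖aug x‖ ≤ M) (u v : EuclideanSpace ℝ (Fin (d + 1))) :
    |hinge (y * pred u x) - hinge (y * pred v x)| ≤ M * ‖u - v‖ :=
  calc |hinge (y * pred u x) - hinge (y * pred v x)|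
      ≤ |y * pred u x - y * pred v x| := abs_hinge_sub_le _ _
    _ = |y| * |inner ℝ (u - v) (aug x)| := by
        rw [pred, pred, inner_sub_left, ← mul_sub, abs_mul]
    _ ≤ 1 * (‖u - v‖ * M) := by
        gcongr
        exact (abs_real_inner_le_norm _ _).trans (by gcongr)
    _ = M * ‖u - v‖ := by ring

lemma abs_regularized_hinge_sub_le {x : EuclideanSpace ℝ (Fin d)} {y M lam kx : ℝ}
    (hy : |y| ≤ 1) (hx : ‖aug x‖ ≤ M) (hlam : 0 ≤ lam) (hkx : 0 ≤ kx)
    (u w : EuclideanSpace ℝ (Fin (d + 1))) :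
    |(lam / 2 * ‖u‖ ^ 2 + hinge (y * pred u x) * kx)
        - (lam / 2 * ‖w‖ ^ 2 + hinge (y * pred w x) * kx)|
      ≤ ‖u - w‖ * (lam / 2 * (‖u‖ + ‖w‖) + M * kx) :=
  calc _ = |lam / 2 * (‖u‖ ^ 2 - ‖w‖ ^ 2)
          + kx * (hinge (y * pred u x) - hinge (y * pred w x))| := by ring_nf
    _ ≤ lam / 2 * |‖u‖ ^ 2 - ‖w‖ ^ 2|
          + kx * |hinge (y * pred u x) - hinge (y * pred w x)| := by
        refine (abs_add_le _ _).trans_eq ?_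
        rw [abs_mul, abs_mul, abs_of_nonneg (by positivity : 0 ≤ lam / 2), abs_of_nonneg hkx]
    _ ≤ lam / 2 * (‖u - w‖ * (‖u‖ + ‖w‖)) + kx * (M * ‖u - w‖) := by
        gcongr
        · exact abs_sq_norm_sub_sq_norm_le u w
        · exact abs_hinge_pred_sub_le hy hx u w
    _ = ‖u - w‖ * (lam / 2 * (‖u‖ + ‖w‖) + M * kx) := by ring

end Hinge

section HingeRisk

variable {ι : Type*} {d : ℕ}

def hingeRisk (S : Finset ι) (xs : ι → EuclideanSpace ℝ (Fin d)) (ys k : ι → ℝ)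
    (w : EuclideanSpace ℝ (Fin (d + 1))) : ℝ :=
  ∑ j ∈ S, hinge (ys j * pred w (xs j)) * k j

variable {S : Finset ι} {xs : ι → EuclideanSpace ℝ (Fin d)} {ys k : ι → ℝ}

lemma hingeRisk_nonneg (hk : ∀ j, 0 ≤ k j) (w : EuclideanSpace ℝ (Fin (d + 1))) :
    0 ≤ hingeRisk S xs ys k w :=
  Finset.sum_nonneg fun j _ ↦ mul_nonneg (hinge_nonneg _) (hk j)

lemma hingeRisk_zero : hingeRisk S xs ys k 0 = ∑ j ∈ S, k j := by
  simp [hingeRisk, pred, hinge_zero]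

lemma convexOn_hingeRisk (hk : ∀ j, 0 ≤ k j) : ConvexOn ℝ univ (hingeRisk S xs ys k) := by
  refine ⟨convex_univ, fun u _ v _ a b ha hb hab ↦ ?_⟩
  simp only [hingeRisk, smul_eq_mul, Finset.mul_sum, ← Finset.sum_add_distrib]
  refine Finset.sum_le_sum fun j _ ↦ ?_
  have h := (convexOn_hinge_pred (xs j) (ys j)).2 (mem_univ u) (mem_univ v) ha hb hab
  simp only [smul_eq_mul] at h
  nlinarith [hk j]

lemma hingeRisk_sub_hingeRisk_erase [DecidableEq ι] {i : ι} (hi : i ∈ S)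
    (w : EuclideanSpace ℝ (Fin (d + 1))) :
    hingeRisk S xs ys k w - hingeRisk (S.erase i) xs ys k w
      = hinge (ys i * pred w (xs i)) * k i := by
  rw [hingeRisk, hingeRisk, ← Finset.add_sum_erase S _ hi, add_sub_cancel_right]

variable {lam c M : ℝ} {w : EuclideanSpace ℝ (Fin (d + 1))}

lemma mul_norm_le_sqrt_of_isMinOn_hingeRisk (hc : 0 ≤ c) (hlam : 0 ≤ lam) (hk : ∀ j, 0 ≤ k j)
    (hw : IsMinOn (fun v ↦ lam / 2 * ‖v‖ ^ 2 + c * hingeRisk S xs ys k v) univ w) :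
    lam * ‖w‖ ≤ √(2 * lam * (c * ∑ j ∈ S, k j)) :=
  mul_norm_le_sqrt_of_isMinOn_regularized hw hlam (mul_nonneg hc (hingeRisk_nonneg hk w))
    (by rw [hingeRisk_zero])

lemma norm_sub_le_of_isMinOn_hingeRisk_erase [DecidableEq ι] {i : ι}
    {u : EuclideanSpace ℝ (Fin (d + 1))} (hi : i ∈ S) (hys : |ys i| ≤ 1)
    (hxs : ‖aug (xs i)‖ ≤ M) (hk : ∀ j, 0 ≤ k j) (hc : 0 ≤ c) (hlam : 0 < lam)
    (hu : IsMinOn (fun v ↦ lam / 2 * ‖v‖ ^ 2 + c * hingeRisk (S.erase i) xs ys k v) univ u)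
    (hw : IsMinOn (fun v ↦ lam / 2 * ‖v‖ ^ 2 + c * hingeRisk S xs ys k v) univ w) :
    ‖u - w‖ ≤ 2 * (c * M * k i) / lam := by
  have hM : 0 ≤ M := (norm_nonneg _).trans hxs
  refine norm_sub_le_of_isMinOn_regularized hlam (by have := hk i; positivity)
    ((convexOn_hingeRisk hk).smul hc) ((convexOn_hingeRisk hk).smul hc) hu hw ?_
  simp only [smul_eq_mul, ← mul_sub, hingeRisk_sub_hingeRisk_erase hi, ← sub_mul]
  have hlip := (le_abs_self _).trans (abs_hinge_pred_sub_le hys hxs u w)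
  calc _ ≤ c * (M * ‖u - w‖ * k i) :=
        mul_le_mul_of_nonneg_left (mul_le_mul_of_nonneg_right hlip (hk i)) hc
    _ = c * M * k i * ‖u - w‖ := by ring

end HingeRisk

theorem llsvm_q_stability_general {d n : ℕ} (lam M Km : ℝ) (hlam : 0 < lam)
    (xs : Fin n → EuclideanSpace ℝ (Fin d)) (ys k : Fin n → ℝ)
    (hys : ∀ j, ys j = 1 ∨ ys j = -1)
    (hM : ∀ j, ‖aug (xs j)‖ ≤ M)
    (hk : ∀ j, k j ∈ Set.Icc (0 : ℝ) Km)
    (i : Fin n) (what whati : EuclideanSpace ℝ (Fin (d + 1)))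
    (hwhat : ∀ w, lam / 2 * ‖what‖ ^ 2 + (1 / n) * ∑ j, hinge (ys j * pred what (xs j)) * k j
      ≤ lam / 2 * ‖w‖ ^ 2 + (1 / n) * ∑ j, hinge (ys j * pred w (xs j)) * k j)
    (hwhati : ∀ w, lam / 2 * ‖whati‖ ^ 2
        + (1 / n) * ∑ j ∈ Finset.univ.erase i, hinge (ys j * pred whati (xs j)) * k j
      ≤ lam / 2 * ‖w‖ ^ 2
        + (1 / n) * ∑ j ∈ Finset.univ.erase i, hinge (ys j * pred w (xs j)) * k j)
    (x : EuclideanSpace ℝ (Fin d)) (y kx : ℝ)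
    (hy : y = 1 ∨ y = -1) (hx : ‖aug x‖ ≤ M) (hkx : kx ∈ Set.Icc (0 : ℝ) Km) :
    |(lam / 2 * ‖whati‖ ^ 2 + hinge (y * pred whati x) * kx)
        - (lam / 2 * ‖what‖ ^ 2 + hinge (y * pred what x) * kx)|
      ≤ 2 * M * k i / (n * lam)
          * (Real.sqrt (2 * lam / n * ∑ j, k j) + M * Km) := by
  have hn : (0 : ℝ) < n := Nat.cast_pos.mpr i.pos
  have hk0 : ∀ j, 0 ≤ k j := fun j ↦ (hk j).1
  have hM0 : 0 ≤ M := (norm_nonneg _).trans hx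
  have hmin_full : IsMinOn (fun v ↦ lam / 2 * ‖v‖ ^ 2 + 1 / n * hingeRisk Finset.univ xs ys k v)
      univ what := isMinOn_univ_iff.mpr hwhat
  have hmin_loo : IsMinOn
      (fun v ↦ lam / 2 * ‖v‖ ^ 2 + 1 / n * hingeRisk (Finset.univ.erase i) xs ys k v)
      univ whati := isMinOn_univ_iff.mpr hwhati
  have hdist : ‖whati - what‖ ≤ 2 * M * k i / (n * lam) := by
    have hyi : |ys i| ≤ 1 := by rcases hys i with h | h <;> simp [h]
    convert norm_sub_le_of_isMinOn_hingeRisk_erase (Finset.mem_univ i) hyi (hM i) hk0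
      (by positivity) hlam hmin_loo hmin_full using 1
    field_simp
  have hnorm_full := mul_norm_le_sqrt_of_isMinOn_hingeRisk (by positivity) hlam.le hk0 hmin_full
  have hsum_erase : ∑ j ∈ Finset.univ.erase i, k j ≤ ∑ j, k j :=
    Finset.sum_le_sum_of_subset_of_nonneg (Finset.erase_subset i _) fun j _ _ ↦ hk0 j
  have hnorm_loo : lam * ‖whati‖ ≤ √(2 * lam * (1 / n * ∑ j, k j)) :=
    (mul_norm_le_sqrt_of_isMinOn_hingeRisk (by positivity) hlam.le hk0 hmin_loo).trans
      (Real.sqrt_le_sqrt (by gcongr))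
  have hreg : lam / 2 * (‖whati‖ + ‖what‖) ≤ √(2 * lam / n * ∑ j, k j) := by
    rw [show 2 * lam / n * ∑ j, k j = 2 * lam * (1 / n * ∑ j, k j) by ring]
    linarith
  have hy1 : |y| ≤ 1 := by rcases hy with h | h <;> simp [h]
  calc _ ≤ ‖whati - what‖ * (lam / 2 * (‖whati‖ + ‖what‖) + M * kx) :=
        abs_regularized_hinge_sub_le hy1 hx hlam.le hkx.1 whati what
    _ ≤ 2 * M * k i / (n * lam) * (√(2 * lam / n * ∑ j, k j) + M * Km) :=
        mul_le_mul hdist (add_le_add hreg (mul_le_mul_of_nonneg_left hkx.2 hM0))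
          (add_nonneg (by positivity) (mul_nonneg hM0 hkx.1)) ((norm_nonneg _).trans hdist)

/-- Stability of the centered regularized loss `q` (supplement to Theorem 8):
for every bounded labelled point `(x, y)` with kernel weight `kx = K(x, x₀, σ)`,
the change of `q(w, (x,y)) = (λ/2)‖w‖² + L(y⟨w,x⟩) kx` (up to the common centering
term) under removal of the `i`-th training example is bounded as stated. -/
theorem llsvm_q_stability {d n : ℕ} (hn : 1 ≤ n) (lam M Km : ℝ) (hlam : 0 < lam)
    (xs : Fin n → EuclideanSpace ℝ (Fin d)) (ys k : Fin n → ℝ)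
    (hys : ∀ j, ys j = 1 ∨ ys j = -1)
    (hM : ∀ j, ‖aug (xs j)‖ ≤ M)
    (hk : ∀ j, k j ∈ Set.Icc (0 : ℝ) Km)
    (i : Fin n) (what whati : EuclideanSpace ℝ (Fin (d + 1)))
    (hwhat : ∀ w, lam / 2 * ‖what‖ ^ 2 + (1 / n) * ∑ j, hinge (ys j * pred what (xs j)) * k j
      ≤ lam / 2 * ‖w‖ ^ 2 + (1 / n) * ∑ j, hinge (ys j * pred w (xs j)) * k j)
    (hwhati : ∀ w, lam / 2 * ‖whati‖ ^ 2
        + (1 / n) * ∑ j ∈ Finset.univ.erase i, hinge (ys j * pred whati (xs j)) * k j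
      ≤ lam / 2 * ‖w‖ ^ 2
        + (1 / n) * ∑ j ∈ Finset.univ.erase i, hinge (ys j * pred w (xs j)) * k j)
    (x : EuclideanSpace ℝ (Fin d)) (y kx : ℝ)
    (hy : y = 1 ∨ y = -1) (hx : ‖aug x‖ ≤ M) (hkx : kx ∈ Set.Icc (0 : ℝ) Km) :
    |(lam / 2 * ‖whati‖ ^ 2 + hinge (y * pred whati x) * kx)
        - (lam / 2 * ‖what‖ ^ 2 + hinge (y * pred what x) * kx)|
      ≤ 2 * M * k i / (n * lam)
          * (Real.sqrt (2 * lam / n * ∑ j, k j) + M * Km) :=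
  llsvm_q_stability_general lam M Km hlam xs ys k hys hM hk i what whati hwhat hwhati x y kx hy hx
    hkx
end
end

section
/- Geometric excess-risk lower bound (second part of the proof of Theorem 1). Fix x₀ with η(x₀) > 1/2 and σ > 0 such that 2η(x) − 1 ≥ (2η(x₀) − 1)/2 for all x ∈ B(x₀,σ). Let w ∈ ℝ^{d+1} be any affine predictor with ⟨w,x₀⟩ ≤ 0 (i.e. disagreeing with the Bayes classifier at x₀), and let Δ = {x ∈ B(x₀,σ) : ⟨w,x⟩ ≤ 0} be its region of disagreement with f_B in the ball. Then R₀₁(w) − R₀₁(f_B) = E_{x∼D_X}[|2η(x)−1|·K(x,x₀,σ)·1_Δ(x)] ≥ ((2η(x₀)−1)/2)·E_{x∼D_X}[K(x,x₀,σ)·1_Δ(x)]; moreover Δ is the intersection of a halfspace with B(x₀,σ) containing x₀, whose volume is at least half the volume of B(x₀,σ). -/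
open MeasureTheory Metric Filter Set
open scoped ENNReal Topology BigOperators

noncomputable section

/-- Local 0-1 risk at a test point, with kernel slice `kk = K(·, x₀, σ)`. -/
def locRisk01 {d : ℕ} (μ : Measure (EuclideanSpace ℝ (Fin d)))
    (η kk f : EuclideanSpace ℝ (Fin d) → ℝ) : ℝ :=
  ∫ x, (η x * (if f x ≤ 0 then (1 : ℝ) else 0)
      + (1 - η x) * (if 0 < f x then (1 : ℝ) else 0)) * kk x ∂μ

/-- Local hinge (L) risk at a test point, with kernel slice `kk = K(·, x₀, σ)`. -/
def locRisk {d : ℕ} (μ : Measure (EuclideanSpace ℝ (Fin d)))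
    (η kk f : EuclideanSpace ℝ (Fin d) → ℝ) : ℝ :=
  ∫ x, (η x * hinge (f x) + (1 - η x) * hinge (-(f x))) * kk x ∂μ

/-! The conditional 0-1 risk of a score `t` at a point where `P[y = 1 | x] = p` is `p` if
`t ≤ 0` and `1 - p` otherwise. On the ball the Bayes score `2η - 1` is nonnegative, so the excess
conditional risk of `w` is `|2η - 1|` exactly where `⟨w, x⟩ ≤ 0`, and off the ball the kernel
vanishes. Since the halfspace `{⟨w, x⟩ ≤ 0}` contains the centre `x₀`, the point reflection
`x ↦ 2x₀ - x` maps the rest of the ball into `Δ`, which gives the volume bound. -/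

def condRisk01 (p t : ℝ) : ℝ :=
  p * (if t ≤ 0 then (1 : ℝ) else 0) + (1 - p) * (if 0 < t then (1 : ℝ) else 0)

theorem condRisk01_eq_ite (p t : ℝ) : condRisk01 p t = if t ≤ 0 then p else 1 - p := by
  by_cases ht : t ≤ 0
  · simp [condRisk01, ht, not_lt.2 ht]
  · simp [condRisk01, ht, not_le.1 ht]

theorem condRisk01_mem_Icc {p : ℝ} (hp : p ∈ Icc 0 1) (t : ℝ) : condRisk01 p t ∈ Icc 0 1 := by
  rw [condRisk01_eq_ite]
  split_ifs
  · exact hp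
  · exact ⟨by linarith [hp.2], by linarith [hp.1]⟩

theorem condRisk01_sub_condRisk01_bayes {p : ℝ} (hp : 0 ≤ 2 * p - 1) (t : ℝ) :
    condRisk01 p t - condRisk01 p (2 * p - 1) = if t ≤ 0 then |2 * p - 1| else 0 := by
  rw [condRisk01_eq_ite, condRisk01_eq_ite, abs_of_nonneg hp]
  split_ifs <;> linarith

section LocalRisk

variable {d : ℕ} {μ : Measure (EuclideanSpace ℝ (Fin d))} {η kk : EuclideanSpace ℝ (Fin d) → ℝ}

theorem locRisk01_eq_integral_condRisk01 (f : EuclideanSpace ℝ (Fin d) → ℝ) :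
    locRisk01 μ η kk f = ∫ x, condRisk01 (η x) (f x) * kk x ∂μ :=
  rfl

theorem integrable_condRisk01_mul [IsFiniteMeasure μ] {Km : ℝ} {f : EuclideanSpace ℝ (Fin d) → ℝ}
    (hη : Measurable η) (hη01 : ∀ x, η x ∈ Icc (0 : ℝ) 1) (hf : Measurable f)
    (hkk : Measurable kk) (hkkb : ∀ x, kk x ∈ Icc (0 : ℝ) Km) :
    Integrable (fun x => condRisk01 (η x) (f x) * kk x) μ := by
  have hmeas : Measurable fun x => condRisk01 (η x) (f x) := by
    simp only [condRisk01_eq_ite]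
    exact Measurable.ite (measurableSet_le hf measurable_const) hη (measurable_const.sub hη)
  refine .of_bound (hmeas.mul hkk).aestronglyMeasurable Km (ae_of_all _ fun x => ?_)
  obtain ⟨hℓ0, hℓ1⟩ := condRisk01_mem_Icc (hη01 x) (f x)
  obtain ⟨hk0, hk1⟩ := hkkb x
  rw [Real.norm_eq_abs, abs_of_nonneg (mul_nonneg hℓ0 hk0)]
  nlinarith

theorem locRisk01_sub_locRisk01_bayes [IsFiniteMeasure μ] {Km : ℝ}
    {f : EuclideanSpace ℝ (Fin d) → ℝ} {B : Set (EuclideanSpace ℝ (Fin d))}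
    (hη : Measurable η) (hη01 : ∀ x, η x ∈ Icc (0 : ℝ) 1) (hf : Measurable f)
    (hkk : Measurable kk) (hkkb : ∀ x, kk x ∈ Icc (0 : ℝ) Km) (hB : MeasurableSet B)
    (hsupp : ∀ x, x ∉ B → kk x = 0) (hbayes : ∀ x ∈ B, 0 ≤ 2 * η x - 1) :
    locRisk01 μ η kk f - locRisk01 μ η kk (fun x => 2 * η x - 1)
      = ∫ x in {x | f x ≤ 0} ∩ B, |2 * η x - 1| * kk x ∂μ := by
  have hfB : Measurable fun x => 2 * η x - 1 := (measurable_const.mul hη).sub measurable_const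
  rw [locRisk01_eq_integral_condRisk01, locRisk01_eq_integral_condRisk01,
    ← integral_sub (integrable_condRisk01_mul hη hη01 hf hkk hkkb)
      (integrable_condRisk01_mul hη hη01 hfB hkk hkkb),
    ← integral_indicator ((measurableSet_le hf measurable_const).inter hB)]
  congr 1 with x
  by_cases hx : x ∈ B
  · rw [← sub_mul, condRisk01_sub_condRisk01_bayes (hbayes x hx)]
    by_cases hfx : f x ≤ 0
    · simp [indicator_of_mem (show x ∈ {x | f x ≤ 0} ∩ B from ⟨hfx, hx⟩), hfx]
    · simp [hfx]
  · simp [hsupp x hx, indicator_of_notMem (show x ∉ {x | f x ≤ 0} ∩ B from fun h => hx h.2)]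

end LocalRisk

theorem mul_setIntegral_le_setIntegral_abs_mul {α : Type*} [MeasurableSpace α] {μ : Measure α}
    [IsFiniteMeasure μ] {η kk : α → ℝ} {Km c : ℝ} {S : Set α} (hS : MeasurableSet S)
    (hη : Measurable η) (hη01 : ∀ x, η x ∈ Icc (0 : ℝ) 1)
    (hkk : Measurable kk) (hkkb : ∀ x, kk x ∈ Icc (0 : ℝ) Km)
    (hc : ∀ x ∈ S, c ≤ 2 * η x - 1) :
    c * ∫ x in S, kk x ∂μ ≤ ∫ x in S, |2 * η x - 1| * kk x ∂μ := by
  have hkk_int : Integrable kk μ :=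
    .of_bound hkk.aestronglyMeasurable Km (ae_of_all _ fun x => by
      rw [Real.norm_eq_abs, abs_of_nonneg (hkkb x).1]; exact (hkkb x).2)
  have habs_int : Integrable (fun x => |2 * η x - 1| * kk x) μ := by
    refine hkk_int.bdd_mul (c := 1) ?_ (ae_of_all _ fun x => ?_)
    · exact ((measurable_const.mul hη).sub measurable_const).abs.aestronglyMeasurable
    · rw [Real.norm_eq_abs, abs_abs, abs_le]
      constructor <;> linarith [(hη01 x).1, (hη01 x).2]
  rw [← integral_const_mul]
  refine setIntegral_mono_on (hkk_int.const_mul c).integrableOn habs_int.integrableOn hS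
    fun x hx => mul_le_mul_of_nonneg_right ?_ (hkkb x).1
  exact (hc x hx).trans (le_abs_self _)

theorem pred_eq_inner_add {d : ℕ} (w : EuclideanSpace ℝ (Fin (d + 1)))
    (x : EuclideanSpace ℝ (Fin d)) :
    pred w x = inner ℝ (WithLp.toLp 2 fun i => w (Fin.castSucc i)) x + w (Fin.last d) := by
  simp only [pred, aug, PiLp.inner_apply, RCLike.inner_apply, conj_trivial,
    Fin.sum_univ_castSucc, Fin.snoc_castSucc, Fin.snoc_last, one_mul]

theorem continuous_pred {d : ℕ} (w : EuclideanSpace ℝ (Fin (d + 1))) : Continuous (pred w) := by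
  simp only [funext (pred_eq_inner_add w)]
  fun_prop

theorem measure_closedBall_le_two_mul_measure_halfspace_inter {E : Type*}
    [NormedAddCommGroup E] [InnerProductSpace ℝ E] [MeasurableSpace E] [MeasurableAdd E]
    [MeasurableNeg E] (μ : Measure E) [μ.IsAddLeftInvariant] [μ.IsNegInvariant]
    {a x₀ : E} {b r : ℝ} (hx₀ : inner ℝ a x₀ ≤ b) :
    μ (closedBall x₀ r) ≤ 2 * μ ({x | inner ℝ a x ≤ b} ∩ closedBall x₀ r) := by
  set H : Set E := {x | inner ℝ a x ≤ b}
  have hreflect : closedBall x₀ r \ H ⊆ (fun x => (2 : ℝ) • x₀ - x) ⁻¹' (H ∩ closedBall x₀ r) := by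
    rintro x ⟨hxB, hxH⟩
    refine ⟨?_, ?_⟩
    · have : b < inner ℝ a x := not_le.1 hxH
      show inner ℝ a ((2 : ℝ) • x₀ - x) ≤ b
      rw [inner_sub_right, real_inner_smul_right]
      linarith
    · have : (2 : ℝ) • x₀ - x - x₀ = -(x - x₀) := by module
      show (2 : ℝ) • x₀ - x ∈ closedBall x₀ r
      rwa [mem_closedBall, dist_eq_norm, this, norm_neg, ← dist_eq_norm]
  calc μ (closedBall x₀ r)
      ≤ μ (closedBall x₀ r ∩ H) + μ (closedBall x₀ r \ H) := measure_le_inter_add_sdiff _ _ _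
    _ ≤ μ (H ∩ closedBall x₀ r) + μ (H ∩ closedBall x₀ r) := by
        rw [inter_comm]
        exact add_le_add le_rfl <| (measure_mono hreflect).trans
          ((μ.measurePreserving_sub_left ((2 : ℝ) • x₀)).measure_preimage_le _)
    _ = 2 * μ (H ∩ closedBall x₀ r) := (two_mul _).symm

/-- Geometric excess-risk lower bound (second part of the proof of Theorem 1): if
`η(x₀) > 1/2`, `2η - 1 ≥ (2η(x₀) - 1)/2` on `B(x₀,σ)` (on which the kernel slice
`kk = K(·,x₀,σ)` is supported), and the affine predictor `w` disagrees with the Bayes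
classifier at `x₀` (i.e. `⟨w,x₀⟩ ≤ 0`), then with `Δ = {x ∈ B(x₀,σ) : ⟨w,x⟩ ≤ 0}` the
excess local 0-1 risk of `w` equals `∫_Δ |2η-1| kk dμ ≥ ((2η(x₀)-1)/2) ∫_Δ kk dμ`;
moreover `Δ` is the intersection of a halfspace with `B(x₀,σ)`, contains `x₀`, and has
volume at least half the volume of `B(x₀,σ)`. -/
theorem geometric_excess_risk_lower_bound {d : ℕ} (μ : Measure (EuclideanSpace ℝ (Fin d)))
    [IsProbabilityMeasure μ] (η kk : EuclideanSpace ℝ (Fin d) → ℝ) (Km : ℝ)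
    (hη : Measurable η) (hη01 : ∀ x, η x ∈ Set.Icc (0 : ℝ) 1)
    (hkk : Measurable kk) (hkkb : ∀ x, kk x ∈ Set.Icc (0 : ℝ) Km)
    (x₀ : EuclideanSpace ℝ (Fin d)) (σ : ℝ) (hσ : 0 < σ)
    (hsupp : ∀ x, x ∉ closedBall x₀ σ → kk x = 0)
    (hx₀ : 1 / 2 < η x₀)
    (hball : ∀ x ∈ closedBall x₀ σ, (2 * η x₀ - 1) / 2 ≤ 2 * η x - 1)
    (w : EuclideanSpace ℝ (Fin (d + 1))) (hw : pred w x₀ ≤ 0) :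
    locRisk01 μ η kk (pred w) - locRisk01 μ η kk (fun x => 2 * η x - 1)
        = ∫ x in {x | pred w x ≤ 0} ∩ closedBall x₀ σ, |2 * η x - 1| * kk x ∂μ ∧
      (2 * η x₀ - 1) / 2 * ∫ x in {x | pred w x ≤ 0} ∩ closedBall x₀ σ, kk x ∂μ
        ≤ ∫ x in {x | pred w x ≤ 0} ∩ closedBall x₀ σ, |2 * η x - 1| * kk x ∂μ ∧
      x₀ ∈ {x | pred w x ≤ 0} ∩ closedBall x₀ σ ∧
      (∃ (a : EuclideanSpace ℝ (Fin d)) (b : ℝ),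
        {x | pred w x ≤ 0} ∩ closedBall x₀ σ
          = {x : EuclideanSpace ℝ (Fin d) | (inner ℝ a x : ℝ) ≤ b} ∩ closedBall x₀ σ) ∧
      volume (closedBall x₀ σ) ≤ 2 * volume ({x | pred w x ≤ 0} ∩ closedBall x₀ σ) := by
  have hbayes : ∀ x ∈ closedBall x₀ σ, 0 ≤ 2 * η x - 1 := fun x hx => by
    linarith [hball x hx]
  set a : EuclideanSpace ℝ (Fin d) := WithLp.toLp 2 fun i => w (Fin.castSucc i)
  have hhalf : {x | pred w x ≤ 0} = {x | inner ℝ a x ≤ -w (Fin.last d)} := by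
    ext x
    rw [mem_ofPred_eq, mem_ofPred_eq, pred_eq_inner_add]
    constructor <;> intro h <;> linarith
  have hΔ : MeasurableSet ({x | pred w x ≤ 0} ∩ closedBall x₀ σ) :=
    (measurableSet_le (continuous_pred w).measurable measurable_const).inter
      measurableSet_closedBall
  refine ⟨locRisk01_sub_locRisk01_bayes hη hη01 (continuous_pred w).measurable hkk hkkb
      measurableSet_closedBall hsupp hbayes,
    mul_setIntegral_le_setIntegral_abs_mul hΔ hη hη01 hkk hkkb fun x hx => hball x hx.2,
    ⟨hw, mem_closedBall_self hσ.le⟩, ⟨a, -w (Fin.last d), by rw [hhalf]⟩, ?_⟩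
  rw [hhalf]
  exact measure_closedBall_le_two_mul_measure_halfspace_inter volume
    (show x₀ ∈ {x | inner ℝ a x ≤ -w (Fin.last d)} from hhalf ▸ hw)
end
end
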